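/- Let p ∈ (1,∞) and let D : c₀₀ → c₀₀ be the linear map defined coordinatewise by: for each n ≥ 1, (D x)_{2^{n-1}} = Σ_{j∈M_n} x_j and (D x)_j = 0 for j ∈ M_n with j ≠ 2^{n-1}, where M_n = [2^{n-1}, 2^n) ∩ ℕ (i.e., D acts on each block M_n as the rank-one summation operator onto the first coordinate of the block). Then D is not bounded with respect to the Baernstein norm: for every constant C > 0 there exists x ∈ c₀₀ with ‖D x‖_{B_p} > C · ‖x‖_{B_p}. -/

import Mathlib

/-- A non-empty finite subset `M` of `ℕ = {1,2,...}` is admissible if `|M| ≤ min M`,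
i.e. `M` is non-empty and its cardinality is at most every element of `M`. -/
def Admissible (M : Finset ℕ) : Prop := M.Nonempty ∧ ∀ k ∈ M, M.card ≤ k

/-- `μ(x, N) = ∑_{n ∈ N} |x_n|`. -/
def mu (x : ℕ → ℝ) (N : Finset ℕ) : ℝ := ∑ n ∈ N, |x n|

/-- `N₁ < N₂ < ⋯ < N_k`: every element of `N i` is smaller than every element of `N j`
whenever `i < j`. -/
def SepChain {k : ℕ} (N : Fin k → Finset ℕ) : Prop :=
  ∀ i j : Fin k, i < j → ∀ a ∈ N i, ∀ b ∈ N j, a < b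

/-- The Baernstein norm
`‖x‖_{B_p} = sup { ν_p(x; N₁,…,N_k) : k ≥ 1, N₁ < ⋯ < N_k admissible }`, where
`ν_p(x; N₁,…,N_k) = (∑_j μ(x,N_j)^p)^{1/p}`. -/
noncomputable def BpNorm (p : ℝ) (x : ℕ → ℝ) : ℝ :=
  sSup { t : ℝ | ∃ (k : ℕ) (N : Fin k → Finset ℕ), 0 < k ∧ (∀ j, Admissible (N j)) ∧
    SepChain N ∧ t = (∑ j, (mu x (N j)) ^ p) ^ (1 / p) }

/-- The block `M_n = [2^{n-1}, 2^n) ∩ ℕ`. -/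
def Mblock (n : ℕ) : Finset ℕ := Finset.Ico (2 ^ (n - 1)) (2 ^ n)

/-- `uep(N) = { 2^k − 1 : k ≥ 1, N ∩ M_k ≠ ∅ }`, the set of upper end points of the
blocks `M_k` that `N` intersects. -/
def uep (N : Finset ℕ) : Finset ℕ :=
  ((Finset.range (N.sup id + 2)).filter fun k => 1 ≤ k ∧ (N ∩ Mblock k).Nonempty).image
    fun k => 2 ^ k - 1

/-- The diagonal operator `Δ(y) = ∑_{n=1}^K y_{2^n−1} · x_n`. -/
def DeltaOp (K : ℕ) (x : ℕ → ℕ → ℝ) (y : ℕ → ℝ) : ℕ → ℝ :=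
  fun j => ∑ n ∈ Finset.Icc 1 K, y (2 ^ n - 1) * x n j


/-!
Take `x = ∑_{n ≤ K} 1_{M_n} / |M_n|`, so that `x_j ≤ 2/j`. Every admissible set `N` then has
`μ(x, N) ≤ 2`, and `‖x‖₁ = K`, so `‖x‖_{B_p}^p ≤ 2^{p-1} K`. On the other hand `D x` is the
indicator of `{2^i : i < K}`; for `K = m + 2^m` the `2^m` points `2^i` with `m ≤ i < K` form a
single admissible set, so `‖D x‖_{B_p} ≥ 2^m`, which is of order `K` and beats `K^{1/p}`.
-/

open Finset

lemma Admissible.one_le {N : Finset ℕ} (hN : Admissible N) {n : ℕ} (hn : n ∈ N) : 1 ≤ n :=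
  (card_pos.2 hN.1).trans_le (hN.2 n hn)

lemma Admissible.mu_le_of_abs_le_div {N : Finset ℕ} (hN : Admissible N) {x : ℕ → ℝ} {c : ℝ}
    (hc : 0 ≤ c) (hx : ∀ j, 1 ≤ j → |x j| ≤ c / j) : mu x N ≤ c := by
  have hcard : (0 : ℝ) < #N := by exact_mod_cast card_pos.2 hN.1
  calc mu x N ≤ ∑ _j ∈ N, c / #N := sum_le_sum fun j hj =>
        (hx j (hN.one_le hj)).trans
          (div_le_div_of_nonneg_left hc hcard (by exact_mod_cast hN.2 j hj))
    _ = c := by rw [sum_const, nsmul_eq_mul]; field_simp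

lemma mu_nonneg (x : ℕ → ℝ) (N : Finset ℕ) : 0 ≤ mu x N :=
  sum_nonneg fun _ _ => abs_nonneg _

lemma mu_image_two_pow (x : ℕ → ℝ) (S : Finset ℕ) :
    mu x (S.image (2 ^ ·)) = ∑ i ∈ S, |x (2 ^ i)| :=
  sum_image fun _ _ _ _ h => Nat.pow_right_injective le_rfl h

lemma SepChain.pairwiseDisjoint {k : ℕ} {N : Fin k → Finset ℕ} (h : SepChain N) :
    (↑(univ : Finset (Fin k)) : Set (Fin k)).PairwiseDisjoint N := by
  intro i _ j _ hij
  rcases hij.lt_or_gt with hij | hji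
  · exact disjoint_left.2 fun a ha ha' => lt_irrefl a (h i j hij a ha a ha')
  · exact disjoint_left.2 fun a ha ha' => lt_irrefl a (h j i hji a ha' a ha)

lemma SepChain.sum_mu_le {k : ℕ} {N : Fin k → Finset ℕ} (hsep : SepChain N)
    (hadm : ∀ j, Admissible (N j)) {x : ℕ → ℝ} {T : ℝ}
    (hT : ∀ U : Finset ℕ, (∀ n ∈ U, 1 ≤ n) → ∑ n ∈ U, |x n| ≤ T) :
    ∑ j, mu x (N j) ≤ T := by
  unfold mu
  rw [← sum_biUnion hsep.pairwiseDisjoint]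
  refine hT _ fun n hn => ?_
  obtain ⟨j, -, hj⟩ := mem_biUnion.1 hn
  exact (hadm j).one_le hj

lemma sum_abs_le_of_support_subset {x : ℕ → ℝ} {S U : Finset ℕ}
    (hS : ∀ j, 1 ≤ j → x j ≠ 0 → j ∈ S) (hU : ∀ n ∈ U, 1 ≤ n) :
    ∑ n ∈ U, |x n| ≤ ∑ n ∈ S, |x n| := by
  rw [← sum_filter_ne_zero]
  refine sum_le_sum_of_subset_of_nonneg (fun j hj => ?_) fun _ _ _ => abs_nonneg _
  rw [mem_filter] at hj
  exact hS j (hU j hj.1) (abs_ne_zero.1 hj.2)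

lemma Real.rpow_le_rpow_sub_one_mul {a B p : ℝ} (ha : 0 ≤ a) (haB : a ≤ B) (hp : 1 ≤ p) :
    a ^ p ≤ B ^ (p - 1) * a := by
  calc a ^ p = a ^ (p - 1) * a ^ (1 : ℝ) := by
        rw [← Real.rpow_add' ha (by linarith), sub_add_cancel]
    _ ≤ B ^ (p - 1) * a := by
        rw [Real.rpow_one]
        exact mul_le_mul_of_nonneg_right (Real.rpow_le_rpow ha haB (by linarith)) ha

/-- `BpNorm p x` is `sSup (nuValues p x)`. -/
def nuValues (p : ℝ) (x : ℕ → ℝ) : Set ℝ :=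
  { t : ℝ | ∃ (k : ℕ) (N : Fin k → Finset ℕ), 0 < k ∧ (∀ j, Admissible (N j)) ∧
    SepChain N ∧ t = (∑ j, (mu x (N j)) ^ p) ^ (1 / p) }

section BpNorm

variable {p : ℝ} {x : ℕ → ℝ} {B T : ℝ}

/-- `ν_p^p = ∑ μ^p ≤ B^{p-1} ∑ μ`, and `∑ μ ≤ T` because the sets of a chain are disjoint. -/
lemma mem_upperBounds_nuValues (hp : 1 ≤ p) (hB : 0 ≤ B)
    (hmu : ∀ N, Admissible N → mu x N ≤ B)
    (hT : ∀ U : Finset ℕ, (∀ n ∈ U, 1 ≤ n) → ∑ n ∈ U, |x n| ≤ T) :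
    (B ^ (p - 1) * T) ^ (1 / p) ∈ upperBounds (nuValues p x) := by
  rintro t ⟨k, N, -, hadm, hsep, rfl⟩
  refine Real.rpow_le_rpow (sum_nonneg fun j _ => Real.rpow_nonneg (mu_nonneg x _) _) ?_
    (by positivity)
  calc ∑ j, mu x (N j) ^ p ≤ ∑ j, B ^ (p - 1) * mu x (N j) := sum_le_sum fun j _ =>
        Real.rpow_le_rpow_sub_one_mul (mu_nonneg x _) (hmu _ (hadm j)) hp
    _ = B ^ (p - 1) * ∑ j, mu x (N j) := by rw [mul_sum]
    _ ≤ B ^ (p - 1) * T := mul_le_mul_of_nonneg_left (hsep.sum_mu_le hadm hT)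
        (Real.rpow_nonneg hB _)

lemma bpNorm_le (hp : 1 ≤ p) (hB : 0 ≤ B) (hmu : ∀ N, Admissible N → mu x N ≤ B)
    (hT : ∀ U : Finset ℕ, (∀ n ∈ U, 1 ≤ n) → ∑ n ∈ U, |x n| ≤ T) :
    BpNorm p x ≤ (B ^ (p - 1) * T) ^ (1 / p) := by
  have hT₀ : 0 ≤ T := by simpa using hT ∅ (by simp)
  exact Real.sSup_le (mem_upperBounds_nuValues hp hB hmu hT) (by positivity)

lemma mu_le_bpNorm (hp : 1 ≤ p)
    (hT : ∀ U : Finset ℕ, (∀ n ∈ U, 1 ≤ n) → ∑ n ∈ U, |x n| ≤ T)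
    {N : Finset ℕ} (hN : Admissible N) : mu x N ≤ BpNorm p x := by
  have hT₀ : 0 ≤ T := by simpa using hT ∅ (by simp)
  have hbdd : BddAbove (nuValues p x) := ⟨_, mem_upperBounds_nuValues hp hT₀
    (fun N hN => hT N fun _ => hN.one_le) hT⟩
  refine le_csSup hbdd ⟨1, fun _ => N, one_pos, fun _ => hN,
    fun i j hij => (hij.ne (Subsingleton.elim i j)).elim, ?_⟩
  rw [Fin.sum_univ_one, one_div, Real.rpow_rpow_inv (mu_nonneg x N) (by linarith)]

end BpNorm

lemma Mblock_succ (i : ℕ) : Mblock (i + 1) = Ico (2 ^ i) (2 ^ (i + 1)) := by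
  simp [Mblock]

lemma mem_Mblock_log_succ {j : ℕ} (hj : j ≠ 0) : j ∈ Mblock (Nat.log 2 j + 1) := by
  rw [Mblock_succ, mem_Ico]
  exact ⟨Nat.pow_log_le_self 2 hj, Nat.lt_pow_succ_log_self one_lt_two j⟩

lemma log_of_mem_Mblock_succ {i j : ℕ} (hj : j ∈ Mblock (i + 1)) : Nat.log 2 j = i := by
  rw [Mblock_succ, mem_Ico] at hj
  exact Nat.log_eq_of_pow_le_of_lt_pow hj.1 hj.2

lemma sum_Ico_one_two_pow {M : Type*} [AddCommMonoid M] (f : ℕ → M) (K : ℕ) :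
    ∑ j ∈ Ico 1 (2 ^ K), f j = ∑ i ∈ range K, ∑ j ∈ Mblock (i + 1), f j := by
  induction K with
  | zero => simp
  | succ K ih =>
    rw [sum_range_succ, ← ih, Mblock_succ,
      sum_Ico_consecutive _ Nat.one_le_two_pow (Nat.pow_le_pow_right two_pos K.le_succ)]

/-- `∑_{n ≤ K} 1_{M_n} / |M_n|`: on the block `M_{i+1}` it takes the value `2^{-i}`. -/
noncomputable def normalizedBlocks (K j : ℕ) : ℝ :=
  if j ∈ Ico 1 (2 ^ K) then ((2 : ℝ) ^ Nat.log 2 j)⁻¹ else 0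

namespace normalizedBlocks

lemma nonneg (K j : ℕ) : 0 ≤ normalizedBlocks K j := by
  unfold normalizedBlocks; split <;> positivity

lemma eq_zero_of_two_pow_le {K j : ℕ} (hj : 2 ^ K ≤ j) : normalizedBlocks K j = 0 :=
  if_neg fun h => (mem_Ico.1 h).2.not_ge hj

lemma support_finite (K : ℕ) : (Function.support (normalizedBlocks K)).Finite :=
  (Ico 1 (2 ^ K)).finite_toSet.subset fun j hj => by
    by_contra h
    exact hj (if_neg h)

lemma le_two_div {K j : ℕ} (hj : 1 ≤ j) : normalizedBlocks K j ≤ 2 / j := by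
  unfold normalizedBlocks
  split
  · have h : (j : ℝ) < 2 ^ Nat.log 2 j * 2 := by
      exact_mod_cast pow_succ 2 (Nat.log 2 j) ▸ Nat.lt_pow_succ_log_self one_lt_two j
    rw [inv_eq_one_div, div_le_div_iff₀ (by positivity) (by exact_mod_cast hj)]
    linarith
  · positivity

lemma sum_Mblock {K i : ℕ} (hi : i < K) : ∑ j ∈ Mblock (i + 1), normalizedBlocks K j = 1 := by
  have hval : ∀ j ∈ Mblock (i + 1), normalizedBlocks K j = ((2 : ℝ) ^ i)⁻¹ := by
    intro j hj
    have hj' := hj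
    rw [Mblock_succ, mem_Ico] at hj'
    have hjK : j < 2 ^ K := hj'.2.trans_le (Nat.pow_le_pow_right two_pos hi)
    rw [normalizedBlocks, if_pos (mem_Ico.2 ⟨Nat.one_le_two_pow.trans hj'.1, hjK⟩),
      log_of_mem_Mblock_succ hj]
  rw [sum_congr rfl hval, sum_const, Mblock_succ, Nat.card_Ico, pow_succ, nsmul_eq_mul,
    show 2 ^ i * 2 - 2 ^ i = 2 ^ i by omega]
  push_cast
  exact mul_inv_cancel₀ (by positivity)

lemma sum_Ico (K : ℕ) : ∑ j ∈ Ico 1 (2 ^ K), normalizedBlocks K j = K := by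
  rw [sum_Ico_one_two_pow, sum_congr rfl fun i hi => sum_Mblock (mem_range.1 hi)]
  simp

lemma sum_abs_le (K : ℕ) {U : Finset ℕ} (hU : ∀ n ∈ U, 1 ≤ n) :
    ∑ n ∈ U, |normalizedBlocks K n| ≤ K := by
  refine (sum_abs_le_of_support_subset (S := Ico 1 (2 ^ K)) (fun j _ hj => ?_) hU).trans_eq ?_
  · by_contra h
    exact hj (if_neg h)
  · simp_rw [abs_of_nonneg (nonneg K _), sum_Ico]

/-- Since `x_j ≤ 2/j`, admissible sets carry `μ ≤ 2`, while the `ℓ¹`-norm is `K`. -/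
lemma bpNorm_le {p : ℝ} (hp : 1 ≤ p) (K : ℕ) :
    BpNorm p (normalizedBlocks K) ≤ (2 ^ (p - 1) * K) ^ (1 / p) :=
  _root_.bpNorm_le hp zero_le_two
    (fun _ hN => hN.mu_le_of_abs_le_div zero_le_two fun _ hj =>
      (abs_of_nonneg (nonneg K _)).trans_le (le_two_div hj))
    fun _ => sum_abs_le K

end normalizedBlocks

/-- The coordinate `0` lies in no block, so `D x 0` is unconstrained. -/
def IsBlockSummation (D : (ℕ → ℝ) → ℕ → ℝ) : Prop :=
  ∀ (x : ℕ → ℝ) (n : ℕ), 1 ≤ n →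
    D x (2 ^ (n - 1)) = (∑ j ∈ Mblock n, x j) ∧ ∀ j ∈ Mblock n, j ≠ 2 ^ (n - 1) → D x j = 0

namespace IsBlockSummation

variable {D : (ℕ → ℝ) → ℕ → ℝ}

lemma apply_two_pow (hD : IsBlockSummation D) (x : ℕ → ℝ) (i : ℕ) :
    D x (2 ^ i) = ∑ j ∈ Mblock (i + 1), x j := by
  simpa using (hD x (i + 1) le_add_self).1

lemma apply_eq_zero (hD : IsBlockSummation D) {x : ℕ → ℝ} {K : ℕ}
    (hx : ∀ j, 2 ^ K ≤ j → x j = 0) {j : ℕ} (hj : 1 ≤ j)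
    (hjK : j ∉ (range K).image (2 ^ ·)) : D x j = 0 := by
  set i := Nat.log 2 j
  have hmem : j ∈ Mblock (i + 1) := mem_Mblock_log_succ (by omega)
  by_cases hji : j = 2 ^ i
  · have hKi : K ≤ i := by
      by_contra h
      exact hjK (mem_image.2 ⟨i, mem_range.2 (by omega), hji.symm⟩)
    rw [hji, hD.apply_two_pow]
    refine sum_eq_zero fun k hk => hx k ?_
    rw [Mblock_succ, mem_Ico] at hk
    exact (Nat.pow_le_pow_right two_pos hKi).trans hk.1
  · exact (hD x (i + 1) le_add_self).2 j hmem (by simpa using hji)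

lemma apply_normalizedBlocks_two_pow (hD : IsBlockSummation D) {K i : ℕ} (hi : i < K) :
    D (normalizedBlocks K) (2 ^ i) = 1 := by
  rw [hD.apply_two_pow, normalizedBlocks.sum_Mblock hi]

lemma sum_abs_apply_normalizedBlocks_le (hD : IsBlockSummation D) (K : ℕ) {U : Finset ℕ}
    (hU : ∀ n ∈ U, 1 ≤ n) :
    ∑ n ∈ U, |D (normalizedBlocks K) n| ≤ K := by
  refine (sum_abs_le_of_support_subset (S := (range K).image (2 ^ ·)) (fun j hj hDj => ?_)
    hU).trans_eq ?_
  · by_contra h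
    exact hDj (hD.apply_eq_zero (fun _ => normalizedBlocks.eq_zero_of_two_pow_le) hj h)
  · rw [← mu, mu_image_two_pow, sum_congr rfl fun i hi => by
      rw [hD.apply_normalizedBlocks_two_pow (mem_range.1 hi), abs_one]]
    simp

/-- The coordinates `2^m, …, 2^{m + 2^m - 1}` of `D x` form an admissible set. -/
lemma two_pow_le_bpNorm (hD : IsBlockSummation D) {p : ℝ} (hp : 1 ≤ p) (m : ℕ) :
    (2 : ℝ) ^ m ≤ BpNorm p (D (normalizedBlocks (m + 2 ^ m))) := by
  set N := (Ico m (m + 2 ^ m)).image (2 ^ ·)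
  have hcard : #N = 2 ^ m := by
    rw [card_image_of_injective _ (Nat.pow_right_injective le_rfl), Nat.card_Ico,
      Nat.add_sub_cancel_left]
  have hN : Admissible N := by
    refine ⟨(nonempty_Ico.2 (by simp)).image _, fun k hk => ?_⟩
    obtain ⟨i, hi, rfl⟩ := mem_image.1 hk
    exact hcard ▸ Nat.pow_le_pow_right two_pos (mem_Ico.1 hi).1
  have hmu : mu (D (normalizedBlocks (m + 2 ^ m))) N = 2 ^ m := by
    rw [mu_image_two_pow, sum_congr rfl fun i hi => by
      rw [hD.apply_normalizedBlocks_two_pow (mem_Ico.1 hi).2, abs_one]]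
    simp
  exact hmu ▸ mu_le_bpNorm hp (fun _ => hD.sum_abs_apply_normalizedBlocks_le _) hN

end IsBlockSummation

lemma exists_mul_rpow_lt_two_pow {p C : ℝ} (hp : 1 < p) (hC : 0 ≤ C) :
    ∃ m : ℕ, C * (2 ^ (p - 1) * (m + 2 ^ m : ℕ)) ^ (1 / p) < 2 ^ m := by
  have hq : 0 < 1 - 1 / p := by
    rw [sub_pos, div_lt_one (by linarith)]
    exact hp
  obtain ⟨m, hm⟩ := (((tendsto_rpow_atTop hq).comp
    (tendsto_pow_atTop_atTop_of_one_lt one_lt_two)).eventually_gt_atTop (2 * C)).exists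
  refine ⟨m, ?_⟩
  have hmt : (m : ℝ) ≤ 2 ^ m := by exact_mod_cast (Nat.lt_two_pow_self (n := m)).le
  set t : ℝ := 2 ^ m
  have ht : 0 < t := by positivity
  have hbase : 2 ^ (p - 1) * (m + 2 ^ m : ℕ) ≤ 2 ^ p * t := by
    calc 2 ^ (p - 1) * (m + 2 ^ m : ℕ) ≤ (2 : ℝ) ^ (p - 1) * (2 * t) := by
          push_cast
          gcongr
          linarith
      _ = 2 ^ p * t := by rw [Real.rpow_sub_one two_ne_zero]; ring
  calc C * (2 ^ (p - 1) * (m + 2 ^ m : ℕ)) ^ (1 / p)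
      ≤ C * (2 ^ p * t) ^ (1 / p) := by gcongr
    _ = 2 * C * t ^ (1 / p) := by
        rw [Real.mul_rpow (by positivity) ht.le, one_div,
          Real.rpow_rpow_inv zero_le_two (by linarith)]
        ring
    _ < t ^ (1 - 1 / p) * t ^ (1 / p) := by gcongr; exact hm
    _ = t := by rw [← Real.rpow_add ht, sub_add_cancel, Real.rpow_one]

/-- Let `p ∈ (1,∞)` and let `D` be the linear map defined coordinatewise by: for each
`n ≥ 1`, `(Dx)_{2^{n-1}} = ∑_{j∈M_n} x_j` and `(Dx)_j = 0` for `j ∈ M_n`, `j ≠ 2^{n-1}`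
(the rank-one summation operator onto the first coordinate of each block
`M_n = [2^{n-1}, 2^n) ∩ ℕ`).  Then `D` is not bounded with respect to the Baernstein norm:
for every `C > 0` there is a finitely supported `x` with `‖Dx‖_{B_p} > C‖x‖_{B_p}`. -/
theorem stmt_15 (p : ℝ) (hp : 1 < p) (D : (ℕ → ℝ) →ₗ[ℝ] (ℕ → ℝ))
    (hD : ∀ (x : ℕ → ℝ) (n : ℕ), 1 ≤ n →
      D x (2 ^ (n - 1)) = (∑ j ∈ Mblock n, x j) ∧
      ∀ j ∈ Mblock n, j ≠ 2 ^ (n - 1) → D x j = 0) :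
    ∀ C : ℝ, 0 < C → ∃ x : ℕ → ℝ,
      (Function.support x).Finite ∧ C * BpNorm p x < BpNorm p (D x) := by
  intro C hC
  obtain ⟨m, hm⟩ := exists_mul_rpow_lt_two_pow hp hC.le
  refine ⟨normalizedBlocks (m + 2 ^ m), normalizedBlocks.support_finite _, ?_⟩
  calc C * BpNorm p (normalizedBlocks (m + 2 ^ m))
      ≤ C * (2 ^ (p - 1) * (m + 2 ^ m : ℕ)) ^ (1 / p) := by
        gcongr
        exact normalizedBlocks.bpNorm_le hp.le _
    _ < 2 ^ m := hm
    _ ≤ BpNorm p (D (normalizedBlocks (m + 2 ^ m))) :=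
        IsBlockSummation.two_pow_le_bpNorm hD hp.le m
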